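/- Let G = G_l ⊙ G_r be a false twin composition, and assume D_k(H) ≠ ∅ for each H ∈ {G, G_l, G_r} and each 0 ≤ k ≤ |TS(H)|. If Equation (2) holds for G_l and for G_r, then Equation (2) holds for G. -/

import Mathlib

/-- A finite simple graph on a subset of an ambient vertex type `α`,
together with a designated twin set `TS ⊆ verts`. -/
structure TSGraph (α : Type*) where
  verts : Finset α
  Adj : α → α → Prop
  symm : ∀ u v, Adj u v → Adj v u
  irrefl : ∀ u, ¬ Adj u u
  adj_mem : ∀ u v, Adj u v → u ∈ verts ∧ v ∈ verts
  TS : Finset α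
  TS_sub : TS ⊆ verts

namespace TSGraph

variable {α : Type*} [DecidableEq α]

/-- `f` encodes a perfect matching of the subgraph of `G` induced by `S`:
every vertex of `S` is paired with an adjacent vertex of `S`, involutively. -/
def IsPM (G : TSGraph α) (S : Finset α) (f : α → α) : Prop :=
  ∀ v ∈ S, f v ∈ S ∧ G.Adj v (f v) ∧ f (f v) = v

/-- `S ⊆ V(G)` dominates `V(G) − TS(G)` and, for some `X ⊆ S ∩ TS(G)` of size `k`,
the subgraph induced by `S − X` has a perfect matching. -/
def Adm (G : TSGraph α) (k : ℕ) (S : Finset α) : Prop :=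
  S ⊆ G.verts ∧
  (∀ v ∈ G.verts, v ∉ G.TS → v ∈ S ∨ ∃ u ∈ S, G.Adj u v) ∧
  ∃ X ⊆ S ∩ G.TS, X.card = k ∧ ∃ f, G.IsPM (S \ X) f

/-- Membership in the family `D_k(G)`: admissible of minimum cardinality. -/
def memD (G : TSGraph α) (k : ℕ) (S : Finset α) : Prop :=
  G.Adm k S ∧ ∀ S', G.Adm k S' → S.card ≤ S'.card

/-- `D_k(G) ≠ ∅`. -/
def DkNonempty (G : TSGraph α) (k : ℕ) : Prop := ∃ S, G.memD k S

/-- `D_k(G) ≠ ∅` for all `0 ≤ k ≤ |TS(G)|`. -/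
def AllDkNonempty (G : TSGraph α) : Prop := ∀ k ≤ G.TS.card, G.DkNonempty k

/-- `γ_k(G)`: the common cardinality of the members of `D_k(G)`. -/
noncomputable def gamma (G : TSGraph α) (k : ℕ) : ℕ :=
  sInf {n | ∃ S, G.Adm k S ∧ S.card = n}

/-- A paired-dominating set of `G`. -/
def IsPDS (G : TSGraph α) (D : Finset α) : Prop :=
  D ⊆ G.verts ∧
  (∀ v ∈ G.verts, v ∈ D ∨ ∃ u ∈ D, G.Adj u v) ∧
  ∃ f, G.IsPM D f

/-- `γ_p(G)`: the paired-domination number. -/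
noncomputable def gammaP (G : TSGraph α) : ℕ :=
  sInf {n | ∃ D, G.IsPDS D ∧ D.card = n}

/-- Membership in `D_p(G)`: minimum-cardinality paired-dominating sets. -/
def memDp (G : TSGraph α) (D : Finset α) : Prop :=
  G.IsPDS D ∧ D.card = G.gammaP

/-- `min(G) = min { γ_k(G) : 0 ≤ k ≤ |TS(G)| }`. -/
noncomputable def minVal (G : TSGraph α) : ℕ :=
  sInf {n | ∃ k ≤ G.TS.card, G.gamma k = n}

/-- `α(G)`: the smallest `k` with `γ_k(G) = min(G)`. -/
noncomputable def alphaVal (G : TSGraph α) : ℕ :=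
  sInf {k | k ≤ G.TS.card ∧ G.gamma k = G.minVal}

/-- `β(G)`: the largest `k` with `γ_k(G) = min(G)`. -/
noncomputable def betaVal (G : TSGraph α) : ℕ :=
  sSup {k | k ≤ G.TS.card ∧ G.gamma k = G.minVal}

/-- Membership in `Ψ(G)`: sets in some `D_k(G)` of cardinality `min(G)`. -/
def memPsi (G : TSGraph α) (D : Finset α) : Prop :=
  (∃ k, k ≤ G.TS.card ∧ G.memD k D) ∧ D.card = G.minVal

/-- Equation (2) holds for `G`. -/
def Eq2Holds (G : TSGraph α) : Prop :=
  ∀ k ≤ G.TS.card,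
    (k ≤ G.alphaVal → G.gamma k = G.minVal + G.alphaVal - k) ∧
    (G.betaVal ≤ k → G.gamma k = G.minVal + k - G.betaVal) ∧
    (G.alphaVal < k → k < G.betaVal → Even (k - G.alphaVal) → G.gamma k = G.minVal) ∧
    (G.alphaVal < k → k < G.betaVal → ¬ Even (k - G.alphaVal) → G.gamma k = G.minVal + 1)

/-- `G = Gl ⊗ Gr` (true twin composition). -/
def IsTrueTwin (G Gl Gr : TSGraph α) : Prop :=
  Disjoint Gl.verts Gr.verts ∧
  G.verts = Gl.verts ∪ Gr.verts ∧
  (∀ u v, G.Adj u v ↔ Gl.Adj u v ∨ Gr.Adj u v ∨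
    (u ∈ Gl.TS ∧ v ∈ Gr.TS) ∨ (u ∈ Gr.TS ∧ v ∈ Gl.TS)) ∧
  G.TS = Gl.TS ∪ Gr.TS

/-- `G = Gl ⊙ Gr` (false twin composition). -/
def IsFalseTwin (G Gl Gr : TSGraph α) : Prop :=
  Disjoint Gl.verts Gr.verts ∧
  G.verts = Gl.verts ∪ Gr.verts ∧
  (∀ u v, G.Adj u v ↔ Gl.Adj u v ∨ Gr.Adj u v) ∧
  G.TS = Gl.TS ∪ Gr.TS

/-- `G = Gl ⊕ Gr` (attachment composition). -/
def IsAttach (G Gl Gr : TSGraph α) : Prop :=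
  Disjoint Gl.verts Gr.verts ∧
  G.verts = Gl.verts ∪ Gr.verts ∧
  (∀ u v, G.Adj u v ↔ Gl.Adj u v ∨ Gr.Adj u v ∨
    (u ∈ Gl.TS ∧ v ∈ Gr.TS) ∨ (u ∈ Gr.TS ∧ v ∈ Gl.TS)) ∧
  G.TS = Gl.TS

/-- The twin-set graph `G` arises from a decomposition tree all of whose associated
twin-set graphs satisfy the property `P`. -/
inductive FromDecompTree (P : TSGraph α → Prop) : TSGraph α → Prop where
  | single (G : TSGraph α) (v : α) (hv : G.verts = {v}) (hts : G.TS = {v})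
      (hadj : ∀ u w, ¬ G.Adj u w) (hP : P G) : FromDecompTree P G
  | ttwin (G Gl Gr : TSGraph α) (hl : FromDecompTree P Gl) (hr : FromDecompTree P Gr)
      (h : IsTrueTwin G Gl Gr) (hP : P G) : FromDecompTree P G
  | ftwin (G Gl Gr : TSGraph α) (hl : FromDecompTree P Gl) (hr : FromDecompTree P Gr)
      (h : IsFalseTwin G Gl Gr) (hP : P G) : FromDecompTree P G
  | attach (G Gl Gr : TSGraph α) (hl : FromDecompTree P Gl) (hr : FromDecompTree P Gr)
      (h : IsAttach G Gl Gr) (hP : P G) : FromDecompTree P G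

end TSGraph

/-!
Equation (2), combined with the parity `γ_k ≡ k (mod 2)` forced by the perfect matching of
`S − X`, says exactly that `γ_k(H) = min(H) + dist(k, {α, α + 2, …, β})`. In a false twin
composition every admissible set splits along `V(G_l) ∪ V(G_r)`, so `γ_k(G)` is the minimum of
`γ_{k_l}(G_l) + γ_{k_r}(G_r)` over `k_l + k_r = k`; and this infimal convolution of the two
distance functions is the distance to `{α_l + α_r, α_l + α_r + 2, …, β_l + β_r}`. So `G` has the
same shape, with `min`, `α` and `β` adding up.
-/

theorem Finset.even_card_of_involution {α : Type*} [DecidableEq α] {T : Finset α} {f : α → α}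
    (hmaps : ∀ v ∈ T, f v ∈ T) (hne : ∀ v ∈ T, f v ≠ v) (hinv : ∀ v ∈ T, f (f v) = v) :
    Even T.card := by
  let g : Function.End T := fun v => ⟨f v, hmaps v v.2⟩
  have hg : g ^ 2 ^ 1 = 1 := funext fun v => Subtype.ext (hinv v v.2)
  have hfix : Fintype.card (Function.fixedPoints g) = 0 :=
    Fintype.card_eq_zero_iff.mpr ⟨fun ⟨v, hv⟩ => hne v v.2 (congrArg Subtype.val hv)⟩
  have hmod := Equiv.Perm.card_fixedPoints_modEq (p := 2) hg
  rw [hfix, Fintype.card_coe] at hmod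
  exact Nat.even_iff.mpr hmod

namespace TSGraph

open Finset

/-- The distance from `k` to `{a, a + 2, …, b}` when `b - a` is even. -/
def parityDist (a b k : ℕ) : ℕ :=
  if k < a then a - k else if k ≤ b then (k - a) % 2 else k - b

theorem parityDist_eq_zero_iff {a b k : ℕ} :
    parityDist a b k = 0 ↔ a ≤ k ∧ k ≤ b ∧ 2 ∣ k - a := by
  unfold parityDist; split_ifs <;> omega

theorem parityDist_add_le {al bl ar br : ℕ} (hl : al ≤ bl) (hr : ar ≤ br) (k₁ k₂ : ℕ) :
    parityDist (al + ar) (bl + br) (k₁ + k₂) ≤ parityDist al bl k₁ + parityDist ar br k₂ := by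
  unfold parityDist; split_ifs <;> omega

theorem exists_parityDist_add_eq {al bl tl ar br tr k : ℕ} (hl : al ≤ bl) (hlt : bl ≤ tl)
    (hr : ar ≤ br) (hrt : br ≤ tr) (hl2 : 2 ∣ bl - al) (hr2 : 2 ∣ br - ar) (hk : k ≤ tl + tr) :
    ∃ k₁ k₂, k₁ + k₂ = k ∧ k₁ ≤ tl ∧ k₂ ≤ tr ∧
      parityDist al bl k₁ + parityDist ar br k₂ = parityDist (al + ar) (bl + br) k := by
  rcases le_or_gt k al with hk₁ | hk₁
  · exact ⟨k, 0, by omega, by omega, by omega, by unfold parityDist; split_ifs <;> omega⟩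
  rcases le_or_gt k (al + ar) with hk₂ | hk₂
  · exact ⟨al, k - al, by omega, by omega, by omega, by unfold parityDist; split_ifs <;> omega⟩
  rcases le_or_gt k (bl + br) with hk₃ | hk₃
  · -- if `k₁ - al` and `k₂ - ar` would both be odd, moving one unit to the left makes both even
    by_cases hodd : (max al (k - br) - al) % 2 = 1 ∧ (k - (al + ar)) % 2 = 0
    · exact ⟨max al (k - br) + 1, k - (max al (k - br)) - 1, by omega, by omega, by omega,
        by unfold parityDist; split_ifs <;> omega⟩
    · exact ⟨max al (k - br), k - max al (k - br), by omega, by omega, by omega,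
        by unfold parityDist; split_ifs <;> omega⟩
  · exact ⟨max bl (k - tr), k - max bl (k - tr), by omega, by omega, by omega,
      by unfold parityDist; split_ifs <;> omega⟩

variable {α : Type*}

theorem IsPM.subset_verts {G : TSGraph α} {T : Finset α} {f : α → α} (h : G.IsPM T f) :
    T ⊆ G.verts :=
  fun v hv => (G.adj_mem _ _ (h v hv).2.1).1

theorem IsPM.even_card [DecidableEq α] {G : TSGraph α} {T : Finset α} {f : α → α}
    (h : G.IsPM T f) : Even T.card :=
  even_card_of_involution (fun v hv => (h v hv).1)
    (fun v hv hfv => G.irrefl v (by simpa only [hfv] using (h v hv).2.1))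
    (fun v hv => (h v hv).2.2)

variable [DecidableEq α]

structure HasGammaProfile (G : TSGraph α) (m a b : ℕ) : Prop where
  le : a ≤ b
  le_card : b ≤ G.TS.card
  two_dvd : 2 ∣ b - a
  gamma_eq : ∀ k ≤ G.TS.card, G.gamma k = m + parityDist a b k

def AdmWith (G : TSGraph α) (X S : Finset α) : Prop :=
  S ⊆ G.verts ∧
  (∀ v ∈ G.verts, v ∉ G.TS → v ∈ S ∨ ∃ u ∈ S, G.Adj u v) ∧
  X ⊆ S ∩ G.TS ∧ ∃ f, G.IsPM (S \ X) f

section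

variable {G : TSGraph α}

theorem AdmWith.unmatched_subset_verts {X S : Finset α} (h : G.AdmWith X S) : X ⊆ G.verts :=
  h.2.2.1.trans (inter_subset_left.trans h.1)

theorem adm_iff_exists_admWith {k : ℕ} {S : Finset α} :
    G.Adm k S ↔ ∃ X, G.AdmWith X S ∧ X.card = k :=
  ⟨fun ⟨hS, hdom, X, hX, hk, hf⟩ => ⟨X, ⟨hS, hdom, hX, hf⟩, hk⟩,
    fun ⟨X, ⟨hS, hdom, hX, hf⟩, hk⟩ => ⟨hS, hdom, X, hX, hk, hf⟩⟩

theorem Adm.le_card_TS {k : ℕ} {S : Finset α} (h : G.Adm k S) : k ≤ G.TS.card := by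
  obtain ⟨-, -, X, hX, rfl, -⟩ := h
  exact card_le_card (hX.trans inter_subset_right)

theorem Adm.card_mod_two {k : ℕ} {S : Finset α} (h : G.Adm k S) : S.card % 2 = k % 2 := by
  obtain ⟨-, -, X, hX, rfl, f, hf⟩ := h
  have hXS : X ⊆ S := hX.trans inter_subset_left
  have heven := Nat.even_iff.mp hf.even_card
  rw [card_sdiff_of_subset hXS] at heven
  have := card_le_card hXS
  omega

theorem gamma_le {k : ℕ} {S : Finset α} (h : G.Adm k S) : G.gamma k ≤ S.card :=
  Nat.sInf_le ⟨S, h, rfl⟩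

theorem exists_adm_card_eq_gamma {k : ℕ} (h : ∃ S, G.Adm k S) :
    ∃ S, G.Adm k S ∧ S.card = G.gamma k :=
  let ⟨S, hS⟩ := h
  Nat.sInf_mem (s := {n | ∃ S, G.Adm k S ∧ S.card = n}) ⟨S.card, S, hS, rfl⟩

theorem gamma_mod_two {k : ℕ} (h : ∃ S, G.Adm k S) : G.gamma k % 2 = k % 2 := by
  obtain ⟨S, hS, hcard⟩ := exists_adm_card_eq_gamma h
  exact hcard ▸ hS.card_mod_two

theorem AllDkNonempty.exists_adm (h : G.AllDkNonempty) : ∀ k ≤ G.TS.card, ∃ S, G.Adm k S :=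
  fun k hk => (h k hk).imp fun _ hS => hS.1

theorem Eq2Holds.hasGammaProfile (hG : ∀ k ≤ G.TS.card, ∃ S, G.Adm k S) (h : G.Eq2Holds) :
    G.HasGammaProfile G.minVal G.alphaVal G.betaVal := by
  obtain ⟨k₀, hk₀, hmin⟩ : ∃ k ≤ G.TS.card, G.gamma k = G.minVal :=
    Nat.sInf_mem (s := {n | ∃ k ≤ G.TS.card, G.gamma k = n}) ⟨_, 0, Nat.zero_le _, rfl⟩
  have hne : {k | k ≤ G.TS.card ∧ G.gamma k = G.minVal}.Nonempty := ⟨k₀, hk₀, hmin⟩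
  obtain ⟨hα, hαmin⟩ : G.alphaVal ≤ G.TS.card ∧ G.gamma G.alphaVal = G.minVal :=
    Nat.sInf_mem hne
  obtain ⟨hβ, hβmin⟩ : G.betaVal ≤ G.TS.card ∧ G.gamma G.betaVal = G.minVal :=
    Nat.sSup_mem hne ⟨_, fun _ hk => hk.1⟩
  have hαβ : G.alphaVal ≤ G.betaVal := Nat.sInf_le ⟨hβ, hβmin⟩
  have hαβ₂ : 2 ∣ G.betaVal - G.alphaVal := by
    have := gamma_mod_two (hG _ hα)
    have := gamma_mod_two (hG _ hβ)
    omega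
  refine ⟨hαβ, hβ, hαβ₂, fun k hk => ?_⟩
  obtain ⟨h₁, h₂, h₃, h₄⟩ := h k hk
  rcases le_or_gt k G.alphaVal with hkα | hαk
  · rw [h₁ hkα]; unfold parityDist; split_ifs <;> omega
  rcases le_or_gt G.betaVal k with hβk | hkβ
  · rw [h₂ hβk]; unfold parityDist; split_ifs <;> omega
  by_cases he : Even (k - G.alphaVal)
  · rw [h₃ hαk hkβ he]; rw [Nat.even_iff] at he; unfold parityDist; split_ifs <;> omega
  · rw [h₄ hαk hkβ he]; rw [Nat.even_iff] at he; unfold parityDist; split_ifs <;> omega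

variable {m a b : ℕ}

theorem HasGammaProfile.minVal_eq (h : G.HasGammaProfile m a b) : G.minVal = m := by
  refine IsLeast.csInf_eq ⟨⟨a, h.le.trans h.le_card, ?_⟩, ?_⟩
  · rw [h.gamma_eq a (h.le.trans h.le_card),
      parityDist_eq_zero_iff.mpr ⟨le_rfl, h.le, by simp⟩, add_zero]
  · rintro _ ⟨k, hk, rfl⟩
    rw [h.gamma_eq k hk]
    exact Nat.le_add_right _ _

theorem HasGammaProfile.setOf_gamma_eq_minVal (h : G.HasGammaProfile m a b) :
    {k | k ≤ G.TS.card ∧ G.gamma k = G.minVal} = {k | a ≤ k ∧ k ≤ b ∧ 2 ∣ k - a} := by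
  ext k
  change k ≤ G.TS.card ∧ G.gamma k = G.minVal ↔ a ≤ k ∧ k ≤ b ∧ 2 ∣ k - a
  rw [h.minVal_eq, ← parityDist_eq_zero_iff]
  constructor
  · rintro ⟨hk, hγ⟩
    rw [h.gamma_eq k hk] at hγ
    omega
  · intro hk
    have hkb := (parityDist_eq_zero_iff.mp hk).2.1
    have hkt := hkb.trans h.le_card
    exact ⟨hkt, by rw [h.gamma_eq k hkt, hk, add_zero]⟩

theorem HasGammaProfile.alphaVal_eq (h : G.HasGammaProfile m a b) : G.alphaVal = a := by
  rw [alphaVal, h.setOf_gamma_eq_minVal]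
  exact IsLeast.csInf_eq ⟨⟨le_rfl, h.le, by simp⟩, fun _ hk => hk.1⟩

theorem HasGammaProfile.betaVal_eq (h : G.HasGammaProfile m a b) : G.betaVal = b := by
  rw [betaVal, h.setOf_gamma_eq_minVal]
  exact IsGreatest.csSup_eq ⟨⟨h.le, le_rfl, h.two_dvd⟩, fun _ hk => hk.2.1⟩

theorem HasGammaProfile.eq2Holds (h : G.HasGammaProfile m a b) : G.Eq2Holds := by
  intro k hk
  have hab := h.le
  have hab₂ := h.two_dvd
  rw [h.minVal_eq, h.alphaVal_eq, h.betaVal_eq, h.gamma_eq k hk, Nat.even_iff]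
  unfold parityDist
  refine ⟨fun _ => ?_, fun _ => ?_, fun _ _ _ => ?_, fun _ _ _ => ?_⟩ <;> split_ifs <;> omega

end

namespace IsFalseTwin

variable {G Gl Gr : TSGraph α}

theorem symm (hc : IsFalseTwin G Gl Gr) : IsFalseTwin G Gr Gl := by
  obtain ⟨hd, hV, hA, hT⟩ := hc
  exact ⟨hd.symm, hV.trans (union_comm _ _), fun u v => (hA u v).trans or_comm,
    hT.trans (union_comm _ _)⟩

theorem verts_subset_left (hc : IsFalseTwin G Gl Gr) : Gl.verts ⊆ G.verts :=
  hc.2.1 ▸ subset_union_left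

theorem notMem_right_of_mem_left (hc : IsFalseTwin G Gl Gr) {v : α} (hv : v ∈ Gl.verts) :
    v ∉ Gr.verts :=
  disjoint_left.mp hc.1 hv

theorem adj_iff_left (hc : IsFalseTwin G Gl Gr) {u v : α} (h : u ∈ Gl.verts ∨ v ∈ Gl.verts) :
    G.Adj u v ↔ Gl.Adj u v := by
  refine (hc.2.2.1 u v).trans (or_iff_left fun hr => ?_)
  have := Gr.adj_mem u v hr
  rcases h with h | h
  · exact hc.notMem_right_of_mem_left h this.1
  · exact hc.notMem_right_of_mem_left h this.2

theorem mem_TS_iff_left (hc : IsFalseTwin G Gl Gr) {v : α} (hv : v ∈ Gl.verts) :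
    v ∈ G.TS ↔ v ∈ Gl.TS := by
  rw [hc.2.2.2, mem_union, or_iff_left fun hr => hc.notMem_right_of_mem_left hv (Gr.TS_sub hr)]

theorem card_inter_add_card_inter (hc : IsFalseTwin G Gl Gr) {S : Finset α}
    (hS : S ⊆ G.verts) : (S ∩ Gl.verts).card + (S ∩ Gr.verts).card = S.card := by
  rw [← card_union_of_disjoint (hc.1.mono inter_subset_right inter_subset_right),
    ← inter_union_distrib_left, ← hc.2.1, inter_eq_left.mpr hS]

theorem card_TS (hc : IsFalseTwin G Gl Gr) : G.TS.card = Gl.TS.card + Gr.TS.card := by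
  rw [hc.2.2.2, card_union_of_disjoint (hc.1.mono Gl.TS_sub Gr.TS_sub)]

theorem isPM_inter_left (hc : IsFalseTwin G Gl Gr) {T : Finset α} {f : α → α}
    (h : G.IsPM T f) : Gl.IsPM (T ∩ Gl.verts) f := by
  intro v hv
  obtain ⟨hvT, hvl⟩ := mem_inter.mp hv
  obtain ⟨hfv, hadj, hff⟩ := h v hvT
  have hadj' := (hc.adj_iff_left (.inl hvl)).mp hadj
  exact ⟨mem_inter.mpr ⟨hfv, (Gl.adj_mem _ _ hadj').2⟩, hadj', hff⟩

theorem isPM_union (hc : IsFalseTwin G Gl Gr) {Tl Tr : Finset α} {fl fr : α → α}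
    (hl : Gl.IsPM Tl fl) (hr : Gr.IsPM Tr fr) :
    G.IsPM (Tl ∪ Tr) (Gl.verts.piecewise fl fr) := by
  intro v hv
  rcases mem_union.mp hv with hv | hv
  · have hvl := hl.subset_verts hv
    obtain ⟨hfv, hadj, hff⟩ := hl v hv
    rw [piecewise_eq_of_mem _ _ _ hvl, piecewise_eq_of_mem _ _ _ (Gl.adj_mem _ _ hadj).2, hff]
    exact ⟨mem_union_left _ hfv, (hc.adj_iff_left (.inl hvl)).mpr hadj, rfl⟩
  · have hvr := hr.subset_verts hv
    obtain ⟨hfv, hadj, hff⟩ := hr v hv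
    rw [piecewise_eq_of_notMem _ _ _ (hc.symm.notMem_right_of_mem_left hvr),
      piecewise_eq_of_notMem _ _ _
        (hc.symm.notMem_right_of_mem_left (Gr.adj_mem _ _ hadj).2), hff]
    exact ⟨mem_union_right _ hfv, (hc.symm.adj_iff_left (.inl hvr)).mpr hadj, rfl⟩

theorem admWith_inter_left (hc : IsFalseTwin G Gl Gr) {X S : Finset α} (h : G.AdmWith X S) :
    Gl.AdmWith (X ∩ Gl.verts) (S ∩ Gl.verts) := by
  obtain ⟨-, hdom, hX, f, hf⟩ := h
  refine ⟨inter_subset_right, fun v hv hvT => ?_, fun x hx => ?_, f, ?_⟩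
  · rcases hdom v (hc.verts_subset_left hv) (by rwa [hc.mem_TS_iff_left hv]) with
      hvS | ⟨u, hu, hadj⟩
    · exact .inl (mem_inter.mpr ⟨hvS, hv⟩)
    · have hadj' := (hc.adj_iff_left (.inr hv)).mp hadj
      exact .inr ⟨u, mem_inter.mpr ⟨hu, (Gl.adj_mem _ _ hadj').1⟩, hadj'⟩
  · obtain ⟨hxX, hxl⟩ := mem_inter.mp hx
    obtain ⟨hxS, hxT⟩ := mem_inter.mp (hX hxX)
    exact mem_inter.mpr ⟨mem_inter.mpr ⟨hxS, hxl⟩, (hc.mem_TS_iff_left hxl).mp hxT⟩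
  · have hf' := hc.isPM_inter_left hf
    rwa [show (S \ X) ∩ Gl.verts = (S ∩ Gl.verts) \ (X ∩ Gl.verts) from
      inf_sdiff_distrib_right _ _ _] at hf'

theorem admWith_union (hc : IsFalseTwin G Gl Gr) {Xl Sl Xr Sr : Finset α}
    (hl : Gl.AdmWith Xl Sl) (hr : Gr.AdmWith Xr Sr) : G.AdmWith (Xl ∪ Xr) (Sl ∪ Sr) := by
  have hXlV := hl.unmatched_subset_verts
  have hXrV := hr.unmatched_subset_verts
  obtain ⟨hSl, hdoml, hXl, fl, hfl⟩ := hl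
  obtain ⟨hSr, hdomr, hXr, fr, hfr⟩ := hr
  refine ⟨hc.2.1 ▸ union_subset_union hSl hSr, fun v hv hvT => ?_, ?_,
    Gl.verts.piecewise fl fr, ?_⟩
  · rcases mem_union.mp (hc.2.1 ▸ hv) with hv | hv
    · rcases hdoml v hv (by rwa [← hc.mem_TS_iff_left hv]) with hvS | ⟨u, hu, hadj⟩
      · exact .inl (mem_union_left _ hvS)
      · exact .inr ⟨u, mem_union_left _ hu, (hc.2.2.1 u v).mpr (.inl hadj)⟩
    · rcases hdomr v hv (by rwa [← hc.symm.mem_TS_iff_left hv]) with hvS | ⟨u, hu, hadj⟩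
      · exact .inl (mem_union_right _ hvS)
      · exact .inr ⟨u, mem_union_right _ hu, (hc.2.2.1 u v).mpr (.inr hadj)⟩
  · rw [hc.2.2.2]
    refine (union_subset_union hXl hXr).trans ?_
    intro x
    simp only [mem_union, mem_inter]
    tauto
  · have hlr : ∀ x ∈ Sl, x ∉ Xr := fun x hx hxr =>
      hc.notMem_right_of_mem_left (hSl hx) (hXrV hxr)
    have hrl : ∀ x ∈ Sr, x ∉ Xl := fun x hx hxl =>
      hc.symm.notMem_right_of_mem_left (hSr hx) (hXlV hxl)
    have hsplit : (Sl ∪ Sr) \ (Xl ∪ Xr) = Sl \ Xl ∪ Sr \ Xr := by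
      ext x
      simp only [mem_union, mem_sdiff]
      have := hlr x
      have := hrl x
      tauto
    rw [hsplit]
    exact hc.isPM_union hfl hfr

theorem adm_union (hc : IsFalseTwin G Gl Gr) {k₁ k₂ : ℕ} {Sl Sr : Finset α}
    (hl : Gl.Adm k₁ Sl) (hr : Gr.Adm k₂ Sr) : G.Adm (k₁ + k₂) (Sl ∪ Sr) := by
  obtain ⟨Xl, hXl, rfl⟩ := adm_iff_exists_admWith.mp hl
  obtain ⟨Xr, hXr, rfl⟩ := adm_iff_exists_admWith.mp hr
  refine adm_iff_exists_admWith.mpr ⟨_, hc.admWith_union hXl hXr, card_union_of_disjoint ?_⟩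
  exact hc.1.mono hXl.unmatched_subset_verts hXr.unmatched_subset_verts

theorem exists_adm_inter (hc : IsFalseTwin G Gl Gr) {k : ℕ} {S : Finset α} (h : G.Adm k S) :
    ∃ k₁ k₂, k₁ + k₂ = k ∧ Gl.Adm k₁ (S ∩ Gl.verts) ∧ Gr.Adm k₂ (S ∩ Gr.verts) := by
  obtain ⟨X, hX, rfl⟩ := adm_iff_exists_admWith.mp h
  refine ⟨_, _, hc.card_inter_add_card_inter hX.unmatched_subset_verts,
    adm_iff_exists_admWith.mpr ⟨_, hc.admWith_inter_left hX, rfl⟩,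
    adm_iff_exists_admWith.mpr ⟨_, hc.symm.admWith_inter_left hX, rfl⟩⟩

theorem gamma_add_le (hc : IsFalseTwin G Gl Gr) {k₁ k₂ : ℕ} (hl : ∃ S, Gl.Adm k₁ S)
    (hr : ∃ S, Gr.Adm k₂ S) : G.gamma (k₁ + k₂) ≤ Gl.gamma k₁ + Gr.gamma k₂ := by
  obtain ⟨Sl, hSl, hcl⟩ := exists_adm_card_eq_gamma hl
  obtain ⟨Sr, hSr, hcr⟩ := exists_adm_card_eq_gamma hr
  rw [← hcl, ← hcr]
  exact (gamma_le (hc.adm_union hSl hSr)).trans (card_union_le Sl Sr)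

theorem exists_add_le_gamma (hc : IsFalseTwin G Gl Gr) {k : ℕ} (h : ∃ S, G.Adm k S) :
    ∃ k₁ k₂, k₁ + k₂ = k ∧ k₁ ≤ Gl.TS.card ∧ k₂ ≤ Gr.TS.card ∧
      Gl.gamma k₁ + Gr.gamma k₂ ≤ G.gamma k := by
  obtain ⟨S, hS, hcard⟩ := exists_adm_card_eq_gamma h
  obtain ⟨k₁, k₂, hk, hl, hr⟩ := hc.exists_adm_inter hS
  refine ⟨k₁, k₂, hk, hl.le_card_TS, hr.le_card_TS, ?_⟩
  rw [← hcard, ← hc.card_inter_add_card_inter hS.1]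
  exact add_le_add (gamma_le hl) (gamma_le hr)

theorem hasGammaProfile (hc : IsFalseTwin G Gl Gr)
    (hGl : ∀ k ≤ Gl.TS.card, ∃ S, Gl.Adm k S) (hGr : ∀ k ≤ Gr.TS.card, ∃ S, Gr.Adm k S)
    {ml al bl mr ar br : ℕ} (hl : Gl.HasGammaProfile ml al bl)
    (hr : Gr.HasGammaProfile mr ar br) : G.HasGammaProfile (ml + mr) (al + ar) (bl + br) where
  le := add_le_add hl.le hr.le
  le_card := hc.card_TS ▸ add_le_add hl.le_card hr.le_card
  two_dvd := by
    have := hl.two_dvd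
    have := hr.two_dvd
    have := hl.le
    have := hr.le
    omega
  gamma_eq k hk := by
    obtain ⟨k₁, k₂, rfl, hk₁, hk₂, hsplit⟩ := exists_parityDist_add_eq hl.le hl.le_card
      hr.le hr.le_card hl.two_dvd hr.two_dvd (hc.card_TS ▸ hk)
    obtain ⟨Sl, hSl⟩ := hGl k₁ hk₁
    obtain ⟨Sr, hSr⟩ := hGr k₂ hk₂
    apply le_antisymm
    · calc G.gamma (k₁ + k₂) ≤ Gl.gamma k₁ + Gr.gamma k₂ := hc.gamma_add_le ⟨Sl, hSl⟩ ⟨Sr, hSr⟩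
        _ = ml + mr + parityDist (al + ar) (bl + br) (k₁ + k₂) := by
          rw [hl.gamma_eq k₁ hk₁, hr.gamma_eq k₂ hk₂, ← hsplit]
          ring
    · obtain ⟨j₁, j₂, hj, hj₁, hj₂, hle⟩ := hc.exists_add_le_gamma ⟨_, hc.adm_union hSl hSr⟩
      have := parityDist_add_le hl.le hr.le j₁ j₂
      rw [hl.gamma_eq j₁ hj₁, hr.gamma_eq j₂ hj₂] at hle
      rw [hj] at this
      omega

end IsFalseTwin

end TSGraph

open TSGraph in
theorem stmt15_general {α : Type*} [DecidableEq α] (G Gl Gr : TSGraph α)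
    (hcomp : IsFalseTwin G Gl Gr)
    (hGl : Gl.AllDkNonempty) (hGr : Gr.AllDkNonempty)
    (hl : Gl.Eq2Holds) (hr : Gr.Eq2Holds) :
    G.Eq2Holds :=
  (hcomp.hasGammaProfile hGl.exists_adm hGr.exists_adm (hl.hasGammaProfile hGl.exists_adm)
    (hr.hasGammaProfile hGr.exists_adm)).eq2Holds

open TSGraph in
/-- For a false twin composition `G = Gl ⊙ Gr` with all `D_k`
families nonempty, if Equation (2) holds for `Gl` and `Gr`, then it holds
for `G`. -/
theorem stmt15 {α : Type*} [DecidableEq α] (G Gl Gr : TSGraph α)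
    (hcomp : IsFalseTwin G Gl Gr)
    (hG : G.AllDkNonempty) (hGl : Gl.AllDkNonempty) (hGr : Gr.AllDkNonempty)
    (hl : Gl.Eq2Holds) (hr : Gr.Eq2Holds) :
    G.Eq2Holds :=
  stmt15_general G Gl Gr hcomp hGl hGr hl hr
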